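/- For every integer k ≥ 1 and every q ∈ [0,1), the operator u_k ∈ B(H_k), defined on basis vectors by u_k e_{(m,a)} = e_{(m+1,a)} if a = (0,…,0) and u_k e_{(m,a)} = e_{(m,a)} otherwise (in tensor notation u_k = t⊗p^{⊗(k−1)} + 1 − 1⊗p^{⊗(k−1)}), is a unitary element of B_k(q). (Its class generates K₁(B_k^{2n+1}(q)) ≅ ℤ.) -/

import Mathlib

noncomputable section

/-- The Hilbert space `H_k = ℓ²(ℤ × ℕ^{k-1})`. -/
abbrev Hk (k : ℕ) : Type := lp (fun _ : ℤ × (Fin (k - 1) → ℕ) => ℂ) 2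

/-- The canonical orthonormal basis vectors `e_{(m,a)}` of `H_k`. -/
noncomputable def ek (k : ℕ) (x : ℤ × (Fin (k - 1) → ℕ)) : Hk k := lp.single 2 x 1

/-- The defining property of the generator
`x_l(q) = t ⊗ (q^N)^{⊗(l−1)} ⊗ √(1−q^{2N})S* ⊗ 1^{⊗(k−1−l)}` for `1 ≤ l ≤ k−1`
(here `l : Fin (k-1)`), with the convention `0⁰ = 1`. -/
def IsXl (k : ℕ) (q : ℝ) (l : Fin (k - 1)) (T : Hk k →L[ℂ] Hk k) : Prop :=
  ∀ (m : ℤ) (a : Fin (k - 1) → ℕ),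
    T (ek k (m, a)) =
      ((q ^ (∑ i ∈ Finset.Iio l, a i) * Real.sqrt (1 - q ^ (2 * a l + 2)) : ℝ) : ℂ) •
        ek k (m + 1, a + Pi.single l 1)

/-- The defining property of the top generator `x_k(q) = t ⊗ (q^N)^{⊗(k−1)}`. -/
def IsXtop (k : ℕ) (q : ℝ) (T : Hk k →L[ℂ] Hk k) : Prop :=
  ∀ (m : ℤ) (a : Fin (k - 1) → ℕ),
    T (ek k (m, a)) = ((q ^ (∑ i, a i) : ℝ) : ℂ) • ek k (m + 1, a)

/-- The unital C*-subalgebra `B_k(q)` of `B(H_k)` generated by `x_1(q), …, x_k(q)`. -/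
noncomputable def Bk (k : ℕ) (x : Fin (k - 1) → (Hk k →L[ℂ] Hk k))
    (xtop : Hk k →L[ℂ] Hk k) : StarSubalgebra ℂ (Hk k →L[ℂ] Hk k) :=
  (StarAlgebra.adjoin ℂ (Set.range x ∪ {xtop})).topologicalClosure

namespace Stmt14Aux

open scoped ComplexConjugate ENNReal

variable {ι : Type*} [DecidableEq ι]

lemma single_one_apply (i j : ι) :
    (lp.single 2 i (1 : ℂ) : lp (fun _ : ι => ℂ) 2) j = if j = i then 1 else 0 := by
  by_cases h : j = i
  · subst h; rw [if_pos rfl, lp.single_apply_self]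
  · rw [if_neg h, lp.single_apply_ne 2 i _ h]

lemma inner_single_eq (i : ι) (f : lp (fun _ : ι => ℂ) 2) :
    (inner ℂ (lp.single 2 i (1 : ℂ)) f : ℂ) = f i := by
  rw [lp.inner_single_left, RCLike.inner_apply, map_one, mul_one]

lemma inner_single_single (i j : ι) :
    (inner ℂ (lp.single 2 i (1 : ℂ)) (lp.single 2 j (1 : ℂ) : lp (fun _ : ι => ℂ) 2) : ℂ) =
      if i = j then 1 else 0 := by
  rw [inner_single_eq, single_one_apply]

lemma vec_ext {f g : lp (fun _ : ι => ℂ) 2}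
    (h : ∀ i, (inner ℂ (lp.single 2 i (1 : ℂ)) f : ℂ) = inner ℂ (lp.single 2 i (1 : ℂ)) g) :
    f = g := by
  apply lp.ext
  funext i
  have := h i
  rwa [inner_single_eq, inner_single_eq] at this

lemma clm_ext {T S : lp (fun _ : ι => ℂ) 2 →L[ℂ] lp (fun _ : ι => ℂ) 2}
    (h : ∀ i, T (lp.single 2 i 1) = S (lp.single 2 i 1)) : T = S := by
  refine ContinuousLinearMap.ext fun f => ?_
  have hs : HasSum (fun i : ι => (lp.single 2 i (f i) : lp (fun _ : ι => ℂ) 2)) f :=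
    lp.hasSum_single ENNReal.ofNat_ne_top f
  have h1 : HasSum (fun i : ι => T (lp.single 2 i (f i))) (T f) := hs.mapL T
  have h2 : HasSum (fun i : ι => S (lp.single 2 i (f i))) (S f) := hs.mapL S
  refine h1.unique ?_
  have key : (fun i : ι => T (lp.single 2 i (f i))) = fun i => S (lp.single 2 i (f i)) := by
    funext i
    have e1 : (lp.single 2 i (f i) : lp (fun _ : ι => ℂ) 2) = f i • lp.single 2 i 1 := by
      have := lp.single_smul (E := fun _ : ι => ℂ) 2 i (f i) (1 : ℂ)
      rw [smul_eq_mul, mul_one] at this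
      exact this
    rw [e1, map_smul, map_smul, h i]
  rwa [key]

lemma memℓp_coeff_mul (f : lp (fun _ : ι => ℂ) 2) (α : ι → ℂ) {c : ℝ} (hc : 0 ≤ c)
    (hα : ∀ i, ‖α i‖ ≤ c) : Memℓp (fun i => α i * f i) 2 := by
  apply memℓp_gen
  have hf : Summable fun i => ‖f i‖ ^ (2 : ℝ≥0∞).toReal :=
    (lp.memℓp f).summable (by norm_num)
  refine Summable.of_nonneg_of_le (fun i => ?_) (fun i => ?_)
    (hf.mul_left (c ^ (2 : ℝ≥0∞).toReal))
  · positivity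
  · calc ‖α i * f i‖ ^ (2 : ℝ≥0∞).toReal ≤ (c * ‖f i‖) ^ (2 : ℝ≥0∞).toReal := by
          apply Real.rpow_le_rpow (norm_nonneg _) ?_ (by norm_num)
          rw [norm_mul]
          exact mul_le_mul_of_nonneg_right (hα i) (norm_nonneg _)
    _ = c ^ (2 : ℝ≥0∞).toReal * ‖f i‖ ^ (2 : ℝ≥0∞).toReal :=
          Real.mul_rpow hc (norm_nonneg _)

lemma norm_coeff_mul_le (f : lp (fun _ : ι => ℂ) 2) (α : ι → ℂ) {c : ℝ} (hc : 0 ≤ c)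
    (hα : ∀ i, ‖α i‖ ≤ c) :
    ‖(⟨fun i => α i * f i, memℓp_coeff_mul f α hc hα⟩ : lp (fun _ : ι => ℂ) 2)‖ ≤ c * ‖f‖ := by
  apply lp.norm_le_of_forall_sum_le (by norm_num) (by positivity)
  intro s
  have hle : ∀ i ∈ s,
      ‖(⟨fun i => α i * f i, memℓp_coeff_mul f α hc hα⟩ : lp (fun _ : ι => ℂ) 2) i‖
          ^ (2 : ℝ≥0∞).toReal
        ≤ c ^ (2 : ℝ≥0∞).toReal * ‖f i‖ ^ (2 : ℝ≥0∞).toReal := by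
    intro i _
    have : ‖α i * f i‖ ≤ c * ‖f i‖ := by
      rw [norm_mul]; exact mul_le_mul_of_nonneg_right (hα i) (norm_nonneg _)
    calc ‖α i * f i‖ ^ (2 : ℝ≥0∞).toReal ≤ (c * ‖f i‖) ^ (2 : ℝ≥0∞).toReal :=
          Real.rpow_le_rpow (norm_nonneg _) this (by norm_num)
      _ = c ^ (2 : ℝ≥0∞).toReal * ‖f i‖ ^ (2 : ℝ≥0∞).toReal :=
          Real.mul_rpow hc (norm_nonneg _)
  calc (∑ i ∈ s,
        ‖(⟨fun i => α i * f i, memℓp_coeff_mul f α hc hα⟩ : lp (fun _ : ι => ℂ) 2) i‖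
          ^ (2 : ℝ≥0∞).toReal)
      ≤ ∑ i ∈ s, c ^ (2 : ℝ≥0∞).toReal * ‖f i‖ ^ (2 : ℝ≥0∞).toReal :=
        Finset.sum_le_sum hle
    _ = c ^ (2 : ℝ≥0∞).toReal * ∑ i ∈ s, ‖f i‖ ^ (2 : ℝ≥0∞).toReal := by
        rw [Finset.mul_sum]
    _ ≤ c ^ (2 : ℝ≥0∞).toReal * ‖f‖ ^ (2 : ℝ≥0∞).toReal := by
        apply mul_le_mul_of_nonneg_left (lp.sum_rpow_le_norm_rpow (by norm_num) f s)
        positivity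
    _ = (c * ‖f‖) ^ (2 : ℝ≥0∞).toReal := (Real.mul_rpow hc (norm_nonneg _)).symm

lemma orthonormal_single : Orthonormal ℂ (fun i : ι => (lp.single 2 i 1 : lp (fun _ : ι => ℂ) 2)) := by
  rw [orthonormal_iff_ite]
  intro i j
  exact inner_single_single i j

lemma opNorm_le_two_shift (T : lp (fun _ : ι => ℂ) 2 →L[ℂ] lp (fun _ : ι => ℂ) 2)
    (σ τ : ι → ι) (hσ : Function.Injective σ) (hτ : Function.Injective τ)
    (α β : ι → ℂ) {c : ℝ} (hc : 0 ≤ c)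
    (hT : ∀ i, T (lp.single 2 i 1) =
      α i • (lp.single 2 (σ i) 1 : lp (fun _ : ι => ℂ) 2) + β i • lp.single 2 (τ i) 1)
    (hα : ∀ i, ‖α i‖ ≤ c) (hβ : ∀ i, ‖β i‖ ≤ c) :
    ‖T‖ ≤ 2 * c := by
  refine T.opNorm_le_bound (by positivity) fun f => ?_
  set gα : lp (fun _ : ι => ℂ) 2 := ⟨fun i => α i * f i, memℓp_coeff_mul f α hc hα⟩ with hgα
  set gβ : lp (fun _ : ι => ℂ) 2 := ⟨fun i => β i * f i, memℓp_coeff_mul f β hc hβ⟩ with hgβ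
  have hOFα := ((orthonormal_single (ι := ι)).comp σ hσ).orthogonalFamily
  have hOFβ := ((orthonormal_single (ι := ι)).comp τ hτ).orthogonalFamily
  set yα := hOFα.linearIsometry gα with hyα
  set yβ := hOFβ.linearIsometry gβ with hyβ
  have hsumα : HasSum (fun i => (α i * f i) • (lp.single 2 (σ i) 1 : lp (fun _ : ι => ℂ) 2)) yα := by
    have := hOFα.hasSum_linearIsometry gα
    simpa [LinearIsometry.toSpanSingleton_apply, Function.comp] using this
  have hsumβ : HasSum (fun i => (β i * f i) • (lp.single 2 (τ i) 1 : lp (fun _ : ι => ℂ) 2)) yβ := by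
    have := hOFβ.hasSum_linearIsometry gβ
    simpa [LinearIsometry.toSpanSingleton_apply, Function.comp] using this
  have hnα : ‖yα‖ ≤ c * ‖f‖ := by
    rw [hyα, hOFα.linearIsometry.norm_map]
    exact norm_coeff_mul_le f α hc hα
  have hnβ : ‖yβ‖ ≤ c * ‖f‖ := by
    rw [hyβ, hOFβ.linearIsometry.norm_map]
    exact norm_coeff_mul_le f β hc hβ
  have hsf : HasSum (fun i : ι => (lp.single 2 i (f i) : lp (fun _ : ι => ℂ) 2)) f :=
    lp.hasSum_single ENNReal.ofNat_ne_top f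
  have hTf : HasSum (fun i : ι => T (lp.single 2 i (f i))) (T f) := hsf.mapL T
  have heq : (fun i : ι => T (lp.single 2 i (f i)))
      = fun i => (α i * f i) • (lp.single 2 (σ i) 1 : lp (fun _ : ι => ℂ) 2)
          + (β i * f i) • lp.single 2 (τ i) 1 := by
    funext i
    have e1 : (lp.single 2 i (f i) : lp (fun _ : ι => ℂ) 2) = f i • lp.single 2 i 1 := by
      have := lp.single_smul (E := fun _ : ι => ℂ) 2 i (f i) (1 : ℂ)
      rw [smul_eq_mul, mul_one] at this
      exact this
    rw [e1, map_smul, hT i, smul_add, smul_smul, smul_smul, mul_comm (f i) (α i),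
      mul_comm (f i) (β i)]
  rw [heq] at hTf
  have hTfeq : T f = yα + yβ := hTf.unique (hsumα.add hsumβ)
  rw [hTfeq]
  calc ‖yα + yβ‖ ≤ ‖yα‖ + ‖yβ‖ := norm_add_le _ _
    _ ≤ c * ‖f‖ + c * ‖f‖ := add_le_add hnα hnβ
    _ = 2 * c * ‖f‖ := by ring

end Stmt14Aux

set_option maxHeartbeats 2000000 in
set_option synthInstance.maxHeartbeats 200000 in
open Stmt14Aux in
/-- For every integer `k ≥ 1` and `q ∈ [0,1)`, the operator
`u_k = t ⊗ p^{⊗(k−1)} + 1 − 1 ⊗ p^{⊗(k−1)}` (which shifts `ℤ` when `a = 0` and is the identity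
otherwise) is a unitary element of `B_k(q)`. -/
theorem stmt_14 (k : ℕ) (hk : 1 ≤ k) (q : ℝ) (hq : q ∈ Set.Ico (0 : ℝ) 1)
    (x : Fin (k - 1) → (Hk k →L[ℂ] Hk k)) (xtop : Hk k →L[ℂ] Hk k)
    (hx : ∀ l, IsXl k q l (x l)) (hxtop : IsXtop k q xtop)
    (u : Hk k →L[ℂ] Hk k)
    (hu : ∀ (m : ℤ) (a : Fin (k - 1) → ℕ),
      u (ek k (m, a)) = if a = 0 then ek k (m + 1, a) else ek k (m, a)) :
    u ∈ Bk k x xtop ∧ star u * u = 1 ∧ u * star u = 1 := by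
  obtain ⟨hq0, hq1⟩ := hq
  -- rephrase the basic lemmas in terms of `ek`
  have inner_ek : ∀ (i : ℤ × (Fin (k - 1) → ℕ)) (f : Hk k), (inner ℂ (ek k i) f : ℂ) = f i :=
    fun i f => inner_single_eq i f
  have ek_inner_ek : ∀ i j : ℤ × (Fin (k - 1) → ℕ),
      (inner ℂ (ek k i) (ek k j) : ℂ) = if i = j then 1 else 0 :=
    fun i j => inner_single_single i j
  have vec_ext_ek : ∀ {f g : Hk k},
      (∀ i, (inner ℂ (ek k i) f : ℂ) = inner ℂ (ek k i) g) → f = g :=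
    fun h => vec_ext h
  have clm_ext_ek : ∀ {T S : Hk k →L[ℂ] Hk k}, (∀ i, T (ek k i) = S (ek k i)) → T = S :=
    fun h => clm_ext h
  have hstar_inner : ∀ (T : Hk k →L[ℂ] Hk k) (v w : Hk k),
      (inner ℂ v ((star T) w) : ℂ) = inner ℂ (T v) w := by
    intro T v w
    rw [ContinuousLinearMap.star_eq_adjoint, ContinuousLinearMap.adjoint_inner_right]
  -- the permutation implemented by `u` and its inverse
  set π : ℤ × (Fin (k - 1) → ℕ) → ℤ × (Fin (k - 1) → ℕ) :=
    fun p => if p.2 = 0 then (p.1 + 1, p.2) else p with hπdef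
  set ρ : ℤ × (Fin (k - 1) → ℕ) → ℤ × (Fin (k - 1) → ℕ) :=
    fun p => if p.2 = 0 then (p.1 - 1, p.2) else p with hρdef
  have hρπ : ∀ p, ρ (π p) = p := by
    rintro ⟨m, a⟩
    by_cases h : a = 0 <;> simp [hπdef, hρdef, h]
  have hπρ : ∀ p, π (ρ p) = p := by
    rintro ⟨m, a⟩
    by_cases h : a = 0 <;> simp [hπdef, hρdef, h]
  have hu' : ∀ p, u (ek k p) = ek k (π p) := by
    rintro ⟨m, a⟩
    by_cases h : a = 0 <;> simp [hu, hπdef, h]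
  have hstaru : ∀ p, (star u) (ek k p) = ek k (ρ p) := by
    intro p
    apply vec_ext_ek
    intro j
    rw [hstar_inner, hu', ek_inner_ek, ek_inner_ek]
    by_cases h : j = ρ p
    · rw [if_pos h, if_pos (by rw [h, hπρ])]
    · rw [if_neg h, if_neg (fun hc => h (by rw [← hc, hρπ]))]
  have h1 : star u * u = 1 := by
    apply clm_ext_ek
    intro p
    rw [ContinuousLinearMap.mul_apply, hu', hstaru, hρπ, ContinuousLinearMap.one_apply]
  have h2 : u * star u = 1 := by
    apply clm_ext_ek
    intro p
    rw [ContinuousLinearMap.mul_apply, hstaru, hu', hπρ, ContinuousLinearMap.one_apply]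
  -- the diagonal operator W = xtop* xtop and its powers
  set W : Hk k →L[ℂ] Hk k := star xtop * xtop with hWdef
  have hW : ∀ p : ℤ × (Fin (k - 1) → ℕ),
      W (ek k p) = ((q ^ (2 * ∑ i, p.2 i) : ℝ) : ℂ) • ek k p := by
    rintro ⟨m, a⟩
    apply vec_ext_ek
    rintro ⟨jm, ja⟩
    rw [hWdef, ContinuousLinearMap.mul_apply, hstar_inner, hxtop, hxtop,
      inner_smul_left, inner_smul_right, ek_inner_ek, inner_smul_right, ek_inner_ek]
    by_cases h : ((jm : ℤ), ja) = ((m : ℤ), a)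
    · have h1' : jm = m := (Prod.ext_iff.mp h).1
      have h2' : ja = a := (Prod.ext_iff.mp h).2
      subst h1'; subst h2'
      rw [if_pos rfl, if_pos rfl, mul_one, mul_one, Complex.conj_ofReal,
        ← Complex.ofReal_mul, ← pow_add]
      norm_num [two_mul]
    · have h' : ¬(((jm + 1 : ℤ), ja) = ((m + 1 : ℤ), a)) := by
        intro hc
        apply h
        have := Prod.ext_iff.mp hc
        exact Prod.ext (by omega) this.2
      rw [if_neg h, if_neg h', mul_zero, mul_zero, mul_zero]
  have hWn : ∀ (n : ℕ) (p : ℤ × (Fin (k - 1) → ℕ)),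
      (W ^ n) (ek k p) = ((q ^ (2 * n * ∑ i, p.2 i) : ℝ) : ℂ) • ek k p := by
    intro n
    induction n with
    | zero => intro p; simp
    | succ n ih =>
      intro p
      rw [pow_succ, ContinuousLinearMap.mul_apply, hW, map_smul, ih, smul_smul,
        ← Complex.ofReal_mul, ← pow_add]
      congr 3
      ring
  -- the approximating sequence
  set vn : ℕ → (Hk k →L[ℂ] Hk k) := fun n => xtop * W ^ n + 1 - W ^ n with hvndef
  have hD : ∀ (n : ℕ) (p : ℤ × (Fin (k - 1) → ℕ)),
      (vn n - u) (ek k p) =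
        (if p.2 = 0 then 0 else ((q ^ ((2 * n + 1) * ∑ i, p.2 i) : ℝ) : ℂ)) •
            ek k (p.1 + 1, p.2) +
          (if p.2 = 0 then 0 else -((q ^ (2 * n * ∑ i, p.2 i) : ℝ) : ℂ)) • ek k p := by
    rintro n ⟨m, a⟩
    rw [hvndef]
    simp only [ContinuousLinearMap.sub_apply, ContinuousLinearMap.add_apply,
      ContinuousLinearMap.mul_apply, ContinuousLinearMap.one_apply]
    rw [hWn, map_smul, hxtop, hu]
    dsimp only
    by_cases h : a = 0
    · subst h
      simp
    · rw [if_neg h, if_neg h, if_neg h, smul_smul, ← Complex.ofReal_mul, ← pow_add]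
      have hexp : 2 * n * ∑ i, a i + ∑ i, a i = (2 * n + 1) * ∑ i, a i := by ring
      rw [hexp]
      module
  have hsum_pos : ∀ a : Fin (k - 1) → ℕ, a ≠ 0 → 1 ≤ ∑ i, a i := by
    intro a ha
    rcases Nat.eq_zero_or_pos (∑ i, a i) with h | h
    · exfalso
      apply ha
      funext i
      exact (Finset.sum_eq_zero_iff.mp h) i (Finset.mem_univ i)
    · exact h
  have hAle : ∀ (n : ℕ) (p : ℤ × (Fin (k - 1) → ℕ)),
      ‖(if p.2 = 0 then 0 else ((q ^ ((2 * n + 1) * ∑ i, p.2 i) : ℝ) : ℂ))‖ ≤ q ^ (2 * n) := by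
    intro n p
    by_cases h : p.2 = 0
    · simp only [if_pos h, norm_zero]
      positivity
    · rw [if_neg h]
      rw [Complex.norm_real, Real.norm_eq_abs, abs_of_nonneg (by positivity)]
      apply pow_le_pow_of_le_one hq0 hq1.le
      calc 2 * n ≤ 2 * n + 1 := Nat.le_succ _
        _ = (2 * n + 1) * 1 := (mul_one _).symm
        _ ≤ (2 * n + 1) * ∑ i, p.2 i := Nat.mul_le_mul_left _ (hsum_pos p.2 h)
  have hBle : ∀ (n : ℕ) (p : ℤ × (Fin (k - 1) → ℕ)),
      ‖(if p.2 = 0 then 0 else -((q ^ (2 * n * ∑ i, p.2 i) : ℝ) : ℂ))‖ ≤ q ^ (2 * n) := by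
    intro n p
    by_cases h : p.2 = 0
    · simp only [if_pos h, norm_zero]
      positivity
    · rw [if_neg h, norm_neg]
      rw [Complex.norm_real, Real.norm_eq_abs, abs_of_nonneg (by positivity)]
      apply pow_le_pow_of_le_one hq0 hq1.le
      calc 2 * n = 2 * n * 1 := (mul_one _).symm
        _ ≤ 2 * n * ∑ i, p.2 i := Nat.mul_le_mul_left _ (hsum_pos p.2 h)
  have hσinj : Function.Injective
      (fun p : ℤ × (Fin (k - 1) → ℕ) => ((p.1 + 1, p.2) : ℤ × (Fin (k - 1) → ℕ))) := by
    rintro ⟨m, a⟩ ⟨m', a'⟩ h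
    simp only [Prod.mk.injEq, add_left_inj] at h
    exact Prod.ext h.1 h.2
  have hopn : ∀ n : ℕ, ‖vn n - u‖ ≤ 2 * q ^ (2 * n) := by
    intro n
    exact opNorm_le_two_shift (vn n - u)
      (fun p => (p.1 + 1, p.2)) id hσinj Function.injective_id
      (fun p => if p.2 = 0 then 0 else ((q ^ ((2 * n + 1) * ∑ i, p.2 i) : ℝ) : ℂ))
      (fun p => if p.2 = 0 then 0 else -((q ^ (2 * n * ∑ i, p.2 i) : ℝ) : ℂ))
      (by positivity) (fun p => hD n p) (hAle n) (hBle n)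
  have hq2 : q ^ 2 < 1 := by nlinarith
  have htend0 : Filter.Tendsto (fun n : ℕ => 2 * q ^ (2 * n)) Filter.atTop (nhds 0) := by
    have h := tendsto_pow_atTop_nhds_zero_of_lt_one (by positivity : (0:ℝ) ≤ q ^ 2) hq2
    have h2' := h.const_mul (2 : ℝ)
    simpa [pow_mul] using h2'
  have htends : Filter.Tendsto (fun n : ℕ => vn n - u) Filter.atTop (nhds 0) :=
    squeeze_zero_norm hopn htend0
  have htend : Filter.Tendsto vn Filter.atTop (nhds u) := by
    have := htends.add_const u
    simpa using this
  have hmem : ∀ n : ℕ, vn n ∈ StarAlgebra.adjoin ℂ (Set.range x ∪ {xtop}) := by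
    intro n
    have hxt : xtop ∈ StarAlgebra.adjoin ℂ (Set.range x ∪ {xtop}) :=
      StarAlgebra.subset_adjoin ℂ _ (Set.mem_union_right _ rfl)
    have hWmem : W ∈ StarAlgebra.adjoin ℂ (Set.range x ∪ {xtop}) :=
      mul_mem (star_mem hxt) hxt
    exact sub_mem (add_mem (mul_mem hxt (pow_mem hWmem n)) (one_mem _)) (pow_mem hWmem n)
  have humem : u ∈ closure ((StarAlgebra.adjoin ℂ (Set.range x ∪ {xtop}) :
      StarSubalgebra ℂ (Hk k →L[ℂ] Hk k)) : Set (Hk k →L[ℂ] Hk k)) :=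
    mem_closure_of_tendsto htend (Filter.Eventually.of_forall hmem)
  refine ⟨?_, h1, h2⟩
  show u ∈ Bk k x xtop
  rw [Bk, ← SetLike.mem_coe, StarSubalgebra.topologicalClosure_coe]
  exact humem
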